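/- Let Ã be a T×T nonnegative irreducible matrix (i.e., the adjacency matrix of a strongly connected directed graph) and let C⁽¹⁾,…,C⁽ᵀ⁾ be nonnegative N×N matrices such that Σ_t C⁽ᵗ⁾ is irreducible. Then for every ω > 0, the supracentrality matrix ℂ(ω) = diag[C⁽¹⁾,…,C⁽ᵀ⁾] + ω(Ã ⊗ I_N) is a nonnegative irreducible NT×NT matrix. -/
import Mathlib

open Matrix Finset

section aux
variable {ι : Type*} [Fintype ι] [DecidableEq ι]

lemma pow_entry_nonneg (M : Matrix ι ι ℝ) (h : ∀ p q, 0 ≤ M p q) :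
    ∀ k p q, 0 ≤ (M ^ k) p q := by
  intro k
  induction k with
  | zero => intro p q; simp [Matrix.one_apply]; positivity
  | succ k ih =>
    intro p q
    rw [pow_succ, Matrix.mul_apply]
    exact Finset.sum_nonneg fun r _ => mul_nonneg (ih p r) (h r q)

lemma pow_entry_mono (B M : Matrix ι ι ℝ) (hB : ∀ p q, 0 ≤ B p q)
    (hBM : ∀ p q, B p q ≤ M p q) : ∀ k p q, (B ^ k) p q ≤ (M ^ k) p q := by
  intro k
  induction k with
  | zero => intro p q; simp
  | succ k ih =>
    intro p q
    rw [pow_succ, pow_succ, Matrix.mul_apply, Matrix.mul_apply]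
    refine Finset.sum_le_sum fun r _ => mul_le_mul (ih p r) (hBM r q) (hB r q)
      (pow_entry_nonneg M (fun a b => le_trans (hB a b) (hBM a b)) k p r)

lemma pow_entry_chain (M : Matrix ι ι ℝ) (h : ∀ p q, 0 ≤ M p q)
    {a b : ℕ} {p q r : ι} (ha : 0 < (M ^ a) p q) (hb : 0 < (M ^ b) q r) :
    0 < (M ^ (a + b)) p r := by
  rw [pow_add, Matrix.mul_apply]
  refine Finset.sum_pos' (fun x _ => mul_nonneg (pow_entry_nonneg M h a p x)
    (pow_entry_nonneg M h b x r)) ⟨q, Finset.mem_univ q, mul_pos ha hb⟩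

lemma exists_pos_of_sum_pos {s : Finset ι} {f : ι → ℝ}
    (h : 0 < ∑ x ∈ s, f x) : ∃ x ∈ s, 0 < f x := by
  by_contra hc
  push_neg at hc
  exact absurd (Finset.sum_nonpos hc) (not_le.mpr h)

end aux

/-- If `Ã` is nonnegative and irreducible, each `C⁽ᵗ⁾` is nonnegative, and
`Σ_t C⁽ᵗ⁾` is irreducible, then for every `ω > 0` the supracentrality matrix
`ℂ(ω) = diag[C⁽¹⁾,…,C⁽ᵀ⁾] + ω (Ã ⊗ I_N)` is nonnegative and irreducible. -/
theorem stmt8 (N T : ℕ)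
    (A : Matrix (Fin T) (Fin T) ℝ) (hAnn : ∀ s t, 0 ≤ A s t)
    (hAirr : ∀ s t, ∃ k, 1 ≤ k ∧ 0 < (A ^ k) s t)
    (C : Fin T → Matrix (Fin N) (Fin N) ℝ) (hCnn : ∀ t i j, 0 ≤ C t i j)
    (hSirr : ∀ i j, ∃ k, 1 ≤ k ∧ 0 < ((∑ t, C t) ^ k) i j)
    (ω : ℝ) (hω : 0 < ω) :
    (∀ p q, 0 ≤ (Matrix.blockDiagonal C +
        ω • Matrix.kroneckerMap (· * ·) (1 : Matrix (Fin N) (Fin N) ℝ) A) p q)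
    ∧ ∀ p q, ∃ k, 1 ≤ k ∧
        0 < ((Matrix.blockDiagonal C +
          ω • Matrix.kroneckerMap (· * ·) (1 : Matrix (Fin N) (Fin N) ℝ) A) ^ k) p q := by
  set M := Matrix.blockDiagonal C +
      ω • Matrix.kroneckerMap (· * ·) (1 : Matrix (Fin N) (Fin N) ℝ) A with hM
  have hMapp : ∀ i s j t, M (i, s) (j, t) =
      (if s = t then C s i j else 0) + ω * ((if i = j then 1 else 0) * A s t) := by
    intro i s j t
    simp [hM, Matrix.blockDiagonal_apply, Matrix.kroneckerMap, Matrix.one_apply]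
  have hMnn : ∀ p q, 0 ≤ M p q := by
    rintro ⟨i, s⟩ ⟨j, t⟩
    rw [hMapp]
    have h1 : (0:ℝ) ≤ if s = t then C s i j else 0 := by
      split_ifs with h; exacts [hCnn s i j, le_refl 0]
    have h2 : (0:ℝ) ≤ (if i = j then (1:ℝ) else 0) * A s t := by
      refine mul_nonneg ?_ (hAnn s t); split_ifs <;> norm_num
    exact add_nonneg h1 (mul_nonneg hω.le h2)
  refine ⟨hMnn, ?_⟩
  -- kronecker part bounded by M
  set B := ω • Matrix.kroneckerMap (· * ·) (1 : Matrix (Fin N) (Fin N) ℝ) A with hB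
  have hBnn : ∀ p q, 0 ≤ B p q := by
    rintro ⟨i, s⟩ ⟨j, t⟩
    simp only [hB, Matrix.smul_apply, Matrix.kroneckerMap, Matrix.one_apply, Matrix.of_apply,
      smul_eq_mul]
    refine mul_nonneg hω.le (mul_nonneg ?_ (hAnn s t))
    split_ifs <;> norm_num
  have hBM : ∀ p q, B p q ≤ M p q := by
    rintro ⟨i, s⟩ ⟨j, t⟩
    have : 0 ≤ Matrix.blockDiagonal C (i, s) (j, t) := by
      rw [Matrix.blockDiagonal_apply]; split_ifs with h
      exacts [hCnn _ _ _, le_refl 0]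
    simp only [hM, Matrix.add_apply]
    linarith
  -- B ^ k = ω^k • (1 ⊗ A^k)
  have hBpow : ∀ k, B ^ k =
      ω ^ k • Matrix.kroneckerMap (· * ·) (1 : Matrix (Fin N) (Fin N) ℝ) (A ^ k) := by
    intro k
    induction k with
    | zero =>
      simp only [pow_zero, one_smul]
      exact (Matrix.one_kronecker_one (α := ℝ)).symm
    | succ k ih =>
      rw [pow_succ, ih, hB, Matrix.smul_mul, Matrix.mul_smul, smul_smul, ← pow_succ]
      congr 1
      rw [← Matrix.mul_kronecker_mul, Matrix.one_mul, ← pow_succ]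
  -- layer moves at a fixed node
  have hA' : ∀ (i : Fin N) (s t : Fin T), ∃ k, 1 ≤ k ∧ 0 < (M ^ k) (i, s) (i, t) := by
    intro i s t
    obtain ⟨k, hk1, hk⟩ := hAirr s t
    refine ⟨k, hk1, lt_of_lt_of_le ?_ (pow_entry_mono B M hBnn hBM k _ _)⟩
    rw [hBpow k]
    simp only [Matrix.smul_apply, Matrix.kroneckerMap, Matrix.of_apply,
      Matrix.one_apply_eq, one_mul, smul_eq_mul]
    exact mul_pos (pow_pos hω k) hk
  -- node moves within a fixed layer
  have hCstep : ∀ (t : Fin T) (i j : Fin N), 0 < C t i j → 0 < (M ^ 1) (i, t) (j, t) := by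
    intro t i j h
    rw [pow_one, hMapp, if_pos rfl]
    have h2 : 0 ≤ ω * ((if i = j then (1:ℝ) else 0) * A t t) :=
      mul_nonneg hω.le (mul_nonneg (by split_ifs <;> norm_num) (hAnn t t))
    linarith
  have key : ∀ (k : ℕ) (i j : Fin N), 0 < ((∑ t, C t) ^ k) i j →
      ∀ s t, ∃ m, 1 ≤ m ∧ 0 < (M ^ m) (i, s) (j, t) := by
    intro k
    induction k with
    | zero =>
      intro i j h s t
      have hij : i = j := by
        by_contra hne
        simp [Matrix.one_apply, hne] at h
      subst hij
      exact hA' i s t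
    | succ k ih =>
      intro i j h s t
      rw [pow_succ', Matrix.mul_apply] at h
      obtain ⟨l, -, hl⟩ := exists_pos_of_sum_pos h
      have hnn1 : 0 ≤ (∑ t, C t) i l := by
        rw [Matrix.sum_apply]
        exact Finset.sum_nonneg fun u _ => hCnn u i l
      have hnn2 : 0 ≤ ((∑ t, C t) ^ k) l j :=
        pow_entry_nonneg _ (fun p q => by
          rw [Matrix.sum_apply]; exact Finset.sum_nonneg fun u _ => hCnn u p q) k l j
      rcases mul_pos_iff.mp hl with ⟨h1, h2⟩ | ⟨h1, h2⟩
      · obtain ⟨u, -, hu⟩ := exists_pos_of_sum_pos (by rwa [Matrix.sum_apply] at h1)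
        obtain ⟨m1, hm11, hm1⟩ := hA' i s u
        have hm2 := hCstep u i l hu
        obtain ⟨m3, hm31, hm3⟩ := ih l j h2 u t
        exact ⟨m1 + 1 + m3, by omega,
          pow_entry_chain M hMnn (pow_entry_chain M hMnn hm1 hm2) hm3⟩
      · exact absurd h1 (not_lt.mpr hnn1)
  rintro ⟨i, s⟩ ⟨j, t⟩
  obtain ⟨k, -, hk⟩ := hSirr i j
  exact key k i j hk s t
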